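/- With the same setup, if γ_⊥ = 0 (i.e., s(γ) = V_r V_r* in the reduced proposal while the full proposal uses the full gradient), the proposal difference satisfies ‖v'_{DR} − v'_{full}‖ ≤ ρ₁ (λ_{r+1}/(λ_{r+1}+1) ‖v‖ + ‖∇Φ(v)‖) + ρ₂ · λ_{r+1}/(λ_{r+1}+1+√(λ_{r+1}+1)) ‖ξ‖. -/

import Mathlib

/-!
Both preconditioners act on the range of `Vr` in the same way, so the difference of the two
proposals lies in the range of `Vp`: it is `Vp (Dp - 1) Vp*` applied to `ρ₁ v`, `Vp Dp Vp*`
applied to `ρ₁ ∇Φ(v)` and `Vp (1 - Sp) Vp*` applied to `ρ₂ ξ`, up to signs. As `Vp` is an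
isometry, it remains to bound operator norms on the complement. From `0 ≤ Λp ≤ λ` one gets
`1/(λ+1) ≤ Dp ≤ 1`, so `‖Dp‖ ≤ 1` and `‖1 - Dp‖ ≤ λ/(λ+1)`. For the square root `Sp`, the identity
`2 (1 - Sp) = (1 - Dp) + (1 - Sp)²` turns the latter into
`‖1 - Sp‖ ≤ 1 - 1/√(λ+1) = λ/(λ+1+√(λ+1))`.
-/

open ContinuousLinearMap

theorem norm_one_sub_le_of_norm_one_sub_mul_self_le {R : Type*} [NormedRing R]
    [NormedAlgebra ℝ R] {a : R} {c : ℝ} (hc : 0 ≤ c) (ha : ‖1 - a‖ ≤ 1)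
    (ha2 : ‖1 - a * a‖ ≤ 1 - c ^ 2) :
    ‖1 - a‖ ≤ 1 - c := by
  have hsplit : (2 : ℝ) • (1 - a) = (1 - a * a) + (1 - a) * (1 - a) := by
    rw [two_smul]; noncomm_ring
  have hquad : 2 * ‖1 - a‖ ≤ 1 - c ^ 2 + ‖1 - a‖ ^ 2 := by
    calc 2 * ‖1 - a‖ = ‖(2 : ℝ) • (1 - a)‖ := by rw [norm_smul, Real.norm_two]
      _ ≤ ‖1 - a * a‖ + ‖1 - a‖ * ‖1 - a‖ := by rw [hsplit]; grw [norm_add_le, norm_mul_le]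
      _ ≤ 1 - c ^ 2 + ‖1 - a‖ ^ 2 := by rw [sq ‖1 - a‖]; gcongr
  have : c ^ 2 ≤ (1 - ‖1 - a‖) ^ 2 := by nlinarith
  linarith [(pow_le_pow_iff_left₀ hc (sub_nonneg.2 ha) two_ne_zero).1 this]

namespace ContinuousLinearMap

section Positive

variable {E : Type*} [NormedAddCommGroup E] [InnerProductSpace ℝ E]

theorem inner_apply_self_le_opNorm_mul (T : E →L[ℝ] E) (x : E) :
    inner ℝ (T x) x ≤ ‖T‖ * ‖x‖ ^ 2 := by
  calc inner ℝ (T x) x ≤ ‖T x‖ * ‖x‖ := real_inner_le_norm _ _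
    _ ≤ ‖T‖ * ‖x‖ * ‖x‖ := by gcongr; exact T.le_opNorm _
    _ = ‖T‖ * ‖x‖ ^ 2 := by ring

variable {T : E →L[ℝ] E}

theorem IsPositive.inner_sq_le (hT : T.IsPositive) (x y : E) :
    inner ℝ (T x) y ^ 2 ≤ inner ℝ (T x) x * inner ℝ (T y) y := by
  have hsymm : inner ℝ (T y) x = inner ℝ (T x) y := by
    rw [hT.inner_left_eq_inner_right, real_inner_comm]
  have hquad : ∀ t : ℝ,
      0 ≤ inner ℝ (T y) y * (t * t) + 2 * inner ℝ (T x) y * t + inner ℝ (T x) x := by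
    intro t
    have := hT.inner_nonneg_left (x + t • y)
    simp only [map_add, map_smul, inner_add_left, inner_add_right, real_inner_smul_left,
      real_inner_smul_right, hsymm] at this
    linarith
  have := discrim_le_zero hquad
  rw [discrim] at this
  linarith

theorem IsPositive.norm_apply_sq_le (hT : T.IsPositive) (x : E) :
    ‖T x‖ ^ 2 ≤ ‖T‖ * inner ℝ (T x) x := by
  rcases (norm_nonneg (T x)).eq_or_lt with h0 | hpos
  · rw [← h0]
    simpa using mul_nonneg T.opNorm_nonneg (hT.inner_nonneg_left x)
  have hcs := hT.inner_sq_le x (T x)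
  have hTTx : inner ℝ (T (T x)) (T x) ≤ ‖T‖ * ‖T x‖ ^ 2 := by
    calc inner ℝ (T (T x)) (T x) ≤ ‖T (T x)‖ * ‖T x‖ := real_inner_le_norm _ _
      _ ≤ ‖T‖ * ‖T x‖ * ‖T x‖ := by gcongr; exact T.le_opNorm _
      _ = ‖T‖ * ‖T x‖ ^ 2 := by ring
  rw [real_inner_self_eq_norm_sq] at hcs
  have := mul_le_mul_of_nonneg_left hTTx (hT.inner_nonneg_left x)
  refine le_of_mul_le_mul_right (a := ‖T x‖ ^ 2) ?_ (by positivity)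
  nlinarith

theorem IsPositive.opNorm_le_of_inner_le (hT : T.IsPositive) {C : ℝ} (hC : 0 ≤ C)
    (h : ∀ x, inner ℝ (T x) x ≤ C * ‖x‖ ^ 2) : ‖T‖ ≤ C := by
  rw [T.norm_eq_iSup_rayleighQuotient hT.isSymmetric]
  refine ciSup_le fun x ↦ ?_
  rcases (sq_nonneg ‖x‖).eq_or_lt with h0 | hpos
  · simp [rayleighQuotient, ← h0, hC]
  rw [rayleighQuotient, reApplyInnerSelf_apply, RCLike.re_to_real,
    abs_of_nonneg (div_nonneg (hT.inner_nonneg_left x) hpos.le), div_le_iff₀ hpos]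
  exact h x

theorem IsPositive.one_sub (hT : T.IsPositive) (h : ‖T‖ ≤ 1) : (1 - T).IsPositive := by
  refine ⟨isPositive_one.isSymmetric.sub hT.isSymmetric, fun x ↦ ?_⟩
  have := T.inner_apply_self_le_opNorm_mul x
  simp only [reApplyInnerSelf_apply, RCLike.re_to_real, sub_apply, one_apply_eq_self,
    inner_sub_left, real_inner_self_eq_norm_sq]
  nlinarith [sq_nonneg ‖x‖]

theorem IsPositive.norm_one_sub_le_one (hT : T.IsPositive) (h : ‖T‖ ≤ 1) : ‖1 - T‖ ≤ 1 :=
  (hT.one_sub h).opNorm_le_of_inner_le zero_le_one fun x ↦ by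
    simp only [sub_apply, one_apply_eq_self, inner_sub_left, real_inner_self_eq_norm_sq]
    linarith [hT.inner_nonneg_left x]

end Positive

section Resolvent

variable {E : Type*} [NormedAddCommGroup E] [InnerProductSpace ℝ E] {Λ D S : E →L[ℝ] E}

theorem inner_resolvent_apply_self (hD : (1 + Λ) ∘L D = 1) (x : E) :
    inner ℝ (D x) x = ‖D x‖ ^ 2 + inner ℝ (Λ (D x)) (D x) := by
  have hx : D x + Λ (D x) = x := congr($hD x)
  calc inner ℝ (D x) x = inner ℝ (D x) (D x + Λ (D x)) := by rw [hx]
    _ = ‖D x‖ ^ 2 + inner ℝ (Λ (D x)) (D x) := by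
      rw [inner_add_right, real_inner_self_eq_norm_sq, real_inner_comm]

theorem IsPositive.resolvent (hΛ : Λ.IsPositive) (hD : (1 + Λ) ∘L D = 1) : D.IsPositive := by
  have hx (x : E) : (1 + Λ) (D x) = x := congr($hD x)
  refine (isPositive_iff D).2 ⟨fun x y ↦ ?_, fun x ↦ ?_⟩
  · calc inner ℝ (D x) y = inner ℝ (D x) ((1 + Λ) (D y)) := by rw [hx]
      _ = inner ℝ ((1 + Λ) (D x)) (D y) := ((isPositive_one.add hΛ).isSymmetric _ _).symm
      _ = inner ℝ x (D y) := by rw [hx]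
  · rw [inner_resolvent_apply_self hD]
    exact add_nonneg (sq_nonneg _) (hΛ.inner_nonneg_left _)

theorem norm_resolvent_le_one (hΛ : Λ.IsPositive) (hD : (1 + Λ) ∘L D = 1) : ‖D‖ ≤ 1 := by
  refine D.opNorm_le_bound zero_le_one fun x ↦ ?_
  have h : ‖D x‖ ^ 2 ≤ ‖D x‖ * ‖x‖ := by
    calc ‖D x‖ ^ 2 ≤ inner ℝ (D x) x := by
          rw [inner_resolvent_apply_self hD]; linarith [hΛ.inner_nonneg_left (D x)]
      _ ≤ ‖D x‖ * ‖x‖ := real_inner_le_norm _ _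
  nlinarith [norm_nonneg (D x), norm_nonneg x]

theorem norm_one_sub_resolvent_le (hΛ : Λ.IsPositive) (hD : (1 + Λ) ∘L D = 1) {lam : ℝ}
    (hlam : ‖Λ‖ ≤ lam) : ‖1 - D‖ ≤ lam / (lam + 1) := by
  have hlam1 : 0 < lam + 1 := by linarith [norm_nonneg Λ]
  have hcoercive (x : E) : ‖x‖ ^ 2 ≤ (1 + lam) * inner ℝ (D x) x := by
    have hx : (1 + Λ) (D x) = x := congr($hD x)
    have h := (isPositive_one.add hΛ).norm_apply_sq_le (D x)
    rw [hx, real_inner_comm] at h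
    have h1Λ : ‖1 + Λ‖ ≤ 1 + lam := (norm_add_le _ _).trans (add_le_add norm_id_le hlam)
    exact h.trans (mul_le_mul_of_nonneg_right h1Λ ((hΛ.resolvent hD).inner_nonneg_left x))
  refine ((hΛ.resolvent hD).one_sub (norm_resolvent_le_one hΛ hD)).opNorm_le_of_inner_le
    (div_nonneg ((norm_nonneg Λ).trans hlam) hlam1.le) fun x ↦ ?_
  rw [sub_apply, one_apply_eq_self, inner_sub_left, real_inner_self_eq_norm_sq]
  have := hcoercive x
  rw [div_mul_eq_mul_div, le_div_iff₀ hlam1]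
  nlinarith

theorem norm_one_sub_sqrt_resolvent_le [CompleteSpace E] (hΛ : Λ.IsPositive)
    (hD : (1 + Λ) ∘L D = 1) {lam : ℝ} (hlam : ‖Λ‖ ≤ lam) (hS : S.IsPositive) (hSD : S ∘L S = D) :
    ‖1 - S‖ ≤ lam / (lam + 1 + √(lam + 1)) := by
  have hlam1 : 0 < lam + 1 := by linarith [norm_nonneg Λ]
  have hμ : √(lam + 1) ^ 2 = lam + 1 := Real.sq_sqrt hlam1.le
  have hμpos : 0 < √(lam + 1) := Real.sqrt_pos.2 hlam1
  have hSnorm : ‖S‖ ≤ 1 := by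
    have : ‖S‖ * ‖S‖ ≤ 1 := by
      rw [← norm_adjoint_comp_self, hS.isSelfAdjoint.adjoint_eq, hSD]
      exact norm_resolvent_le_one hΛ hD
    nlinarith [norm_nonneg S]
  have hS2 : ‖1 - S * S‖ ≤ 1 - (√(lam + 1))⁻¹ ^ 2 := by
    rw [mul_def, hSD, inv_pow, hμ]
    convert norm_one_sub_resolvent_le hΛ hD hlam using 1
    field_simp
    ring
  calc ‖1 - S‖ ≤ 1 - (√(lam + 1))⁻¹ :=
        norm_one_sub_le_of_norm_one_sub_mul_self_le (by positivity)
          (hS.norm_one_sub_le_one hSnorm) hS2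
    _ = lam / (lam + 1 + √(lam + 1)) := by
      rw [eq_div_iff (by positivity)]
      field_simp
      linear_combination hμ

end Resolvent

section Frame

variable {𝕜 E F G : Type*} [RCLike 𝕜]
  [NormedAddCommGroup E] [InnerProductSpace 𝕜 E] [CompleteSpace E]
  [NormedAddCommGroup F] [InnerProductSpace 𝕜 F] [CompleteSpace F]
  [NormedAddCommGroup G] [InnerProductSpace 𝕜 G] [CompleteSpace G]
  {Vr : G →L[𝕜] E} {Vp : F →L[𝕜] E}

noncomputable def blockDiag (Vr : G →L[𝕜] E) (Vp : F →L[𝕜] E) (A : G →L[𝕜] G)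
    (B : F →L[𝕜] F) : E →L[𝕜] E :=
  Vr ∘L A ∘L adjoint Vr + Vp ∘L B ∘L adjoint Vp

noncomputable def lowRankUpdate (Vr : G →L[𝕜] E) (A : G →L[𝕜] G) : E →L[𝕜] E :=
  1 + Vr ∘L (A - 1) ∘L adjoint Vr

theorem blockDiag_sub_lowRankUpdate (hcompl : Vr ∘L adjoint Vr + Vp ∘L adjoint Vp = 1)
    (A : G →L[𝕜] G) (B : F →L[𝕜] F) :
    blockDiag Vr Vp A B - lowRankUpdate Vr A = Vp ∘L (B - 1) ∘L adjoint Vp := by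
  ext x
  have hx : Vr (adjoint Vr x) + Vp (adjoint Vp x) = x := congr($hcompl x)
  simp only [blockDiag, lowRankUpdate, sub_apply, add_apply, comp_apply, one_apply_eq_self,
    map_sub]
  linear_combination (norm := abel) hx

theorem blockDiag_sub_lowRankUpdate_comp (hVr : adjoint Vr ∘L Vr = 1)
    (A : G →L[𝕜] G) (B : F →L[𝕜] F) :
    blockDiag Vr Vp A B - lowRankUpdate Vr A ∘L (Vr ∘L adjoint Vr) = Vp ∘L B ∘L adjoint Vp := by
  ext x
  have hx : adjoint Vr (Vr (adjoint Vr x)) = adjoint Vr x := congr($hVr (adjoint Vr x))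
  simp only [blockDiag, lowRankUpdate, sub_apply, add_apply, comp_apply, one_apply_eq_self,
    map_sub, hx]
  abel

theorem norm_le_one_of_adjoint_comp_self_eq_one {V : F →L[𝕜] E} (hV : adjoint V ∘L V = 1) :
    ‖V‖ ≤ 1 := by
  have : ‖V‖ * ‖V‖ ≤ 1 := by rw [← norm_adjoint_comp_self, hV]; exact norm_id_le
  nlinarith [norm_nonneg V]

theorem opNorm_comp_comp_adjoint_le {V : F →L[𝕜] E} (hV : adjoint V ∘L V = 1) (B : F →L[𝕜] F) :
    ‖V ∘L B ∘L adjoint V‖ ≤ ‖B‖ := by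
  have hV1 := norm_le_one_of_adjoint_comp_self_eq_one hV
  calc ‖V ∘L B ∘L adjoint V‖ ≤ ‖V‖ * (‖B‖ * ‖adjoint V‖) := by
        grw [opNorm_comp_le, opNorm_comp_le]
    _ ≤ 1 * (‖B‖ * 1) := by
        rw [LinearIsometryEquiv.norm_map]; gcongr
    _ = ‖B‖ := by ring

end Frame

end ContinuousLinearMap

theorem stmt11_general
    {H : Type*} [NormedAddCommGroup H] [InnerProductSpace ℝ H] [CompleteSpace H]
    {F : Type*} [NormedAddCommGroup F] [InnerProductSpace ℝ F] [CompleteSpace F]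
    {r : ℕ}
    (Vr : EuclideanSpace ℝ (Fin r) →L[ℝ] H) (Vp : F →L[ℝ] H)
    (hVr : (adjoint Vr) ∘L Vr = 1) (hVp : (adjoint Vp) ∘L Vp = 1)
    (hcompl : Vr ∘L adjoint Vr + Vp ∘L adjoint Vp = 1)
    (Dr Sr : EuclideanSpace ℝ (Fin r) →L[ℝ] EuclideanSpace ℝ (Fin r))
    (Λp Dp Sp : F →L[ℝ] F)
    (lam : ℝ)
    (hΛpsa : IsSelfAdjoint Λp) (hΛppos : ∀ x, 0 ≤ (inner ℝ (Λp x) x : ℝ))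
    (hΛpnorm : ‖Λp‖ ≤ lam)
    (hDp₂ : (1 + Λp) ∘L Dp = 1)
    (hSpsa : IsSelfAdjoint Sp) (hSppos : ∀ x, 0 ≤ (inner ℝ (Sp x) x : ℝ))
    (hSp : Sp ∘L Sp = Dp)
    (ρ₁ ρ₂ : ℝ) (hρ₁ : 0 ≤ ρ₁) (hρ₂ : 0 ≤ ρ₂)
    (v g ξ : H)
    (K Khalf Khat Khathalf : H →L[ℝ] H)
    (hK : K = Vr ∘L Dr ∘L adjoint Vr + Vp ∘L Dp ∘L adjoint Vp)
    (hKhalf : Khalf = Vr ∘L Sr ∘L adjoint Vr + Vp ∘L Sp ∘L adjoint Vp)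
    (hKhat : Khat = 1 + Vr ∘L (Dr - 1) ∘L adjoint Vr)
    (hKhathalf : Khathalf = 1 + Vr ∘L (Sr - 1) ∘L adjoint Vr)
    (vfull vdr : H)
    (hvfull : vfull = v - ρ₁ • K v - ρ₁ • K g + ρ₂ • Khalf ξ)
    (hvdr : vdr = v - ρ₁ • Khat v - ρ₁ • Khat ((Vr ∘L adjoint Vr) g) + ρ₂ • Khathalf ξ) :
    ‖vdr - vfull‖ ≤
      ρ₁ * ((lam / (lam + 1)) * ‖v‖ + ‖g‖) +
        ρ₂ * (lam / (lam + 1 + Real.sqrt (lam + 1))) * ‖ξ‖ := by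
  have hΛ : Λp.IsPositive := (isPositive_iff' Λp).2 ⟨hΛpsa, hΛppos⟩
  have hS : Sp.IsPositive := (isPositive_iff' Sp).2 ⟨hSpsa, hSppos⟩
  have hprior : ‖K - Khat‖ ≤ lam / (lam + 1) := by
    rw [hK, hKhat]
    calc _ = ‖Vp ∘L (Dp - 1) ∘L adjoint Vp‖ :=
          congrArg norm (blockDiag_sub_lowRankUpdate hcompl Dr Dp)
      _ ≤ ‖1 - Dp‖ := by rw [norm_sub_rev]; exact opNorm_comp_comp_adjoint_le hVp _
      _ ≤ lam / (lam + 1) := norm_one_sub_resolvent_le hΛ hDp₂ hΛpnorm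
  have hgrad : ‖K - Khat ∘L (Vr ∘L adjoint Vr)‖ ≤ 1 := by
    rw [hK, hKhat]
    calc _ = ‖Vp ∘L Dp ∘L adjoint Vp‖ :=
          congrArg norm (blockDiag_sub_lowRankUpdate_comp hVr Dr Dp)
      _ ≤ ‖Dp‖ := opNorm_comp_comp_adjoint_le hVp _
      _ ≤ 1 := norm_resolvent_le_one hΛ hDp₂
  have hnoise : ‖Khalf - Khathalf‖ ≤ lam / (lam + 1 + √(lam + 1)) := by
    rw [hKhalf, hKhathalf]
    calc _ = ‖Vp ∘L (Sp - 1) ∘L adjoint Vp‖ :=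
          congrArg norm (blockDiag_sub_lowRankUpdate hcompl Sr Sp)
      _ ≤ ‖1 - Sp‖ := by rw [norm_sub_rev]; exact opNorm_comp_comp_adjoint_le hVp _
      _ ≤ _ := norm_one_sub_sqrt_resolvent_le hΛ hDp₂ hΛpnorm hS hSp
  have hdiff : vdr - vfull = ρ₁ • (K - Khat) v + ρ₁ • (K - Khat ∘L (Vr ∘L adjoint Vr)) g
      - ρ₂ • (Khalf - Khathalf) ξ := by
    rw [hvdr, hvfull]
    simp only [sub_apply, comp_apply, smul_sub]
    abel
  rw [hdiff]
  calc _ ≤ ρ₁ * (‖K - Khat‖ * ‖v‖) + ρ₁ * (‖K - Khat ∘L (Vr ∘L adjoint Vr)‖ * ‖g‖)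
        + ρ₂ * (‖Khalf - Khathalf‖ * ‖ξ‖) := by
        grw [norm_sub_le, norm_add_le, norm_smul, norm_smul, norm_smul, le_opNorm, le_opNorm,
          le_opNorm, Real.norm_of_nonneg hρ₁, Real.norm_of_nonneg hρ₂]
    _ ≤ ρ₁ * (lam / (lam + 1) * ‖v‖) + ρ₁ * (1 * ‖g‖)
        + ρ₂ * (lam / (lam + 1 + √(lam + 1)) * ‖ξ‖) := by gcongr
    _ = _ := by ring

/-- Bound on the difference between the dimension-reduced MALA proposal (with `γ_⊥ = 0`, i.e. `s(γ) = Vr Vr*`)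
using `K̂ = I + Vr(Dr − I)Vr*` and the full proposal using `K = V (I+Λ)⁻¹ V*`:
`‖v'_DR − v'_full‖ ≤ ρ₁ λ/(λ+1) (λ/(λ+1)‖v‖ + ‖∇Φ(v)‖) + ρ₂ λ/(λ+1+√(λ+1)) ‖ξ‖`,
where `λ = λ_{r+1}` bounds the tail eigenvalues (`‖Λ_⊥‖ ≤ λ`). -/
theorem stmt11
    {H : Type*} [NormedAddCommGroup H] [InnerProductSpace ℝ H] [CompleteSpace H]
    {F : Type*} [NormedAddCommGroup F] [InnerProductSpace ℝ F] [CompleteSpace F]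
    {r : ℕ}
    (Vr : EuclideanSpace ℝ (Fin r) →L[ℝ] H) (Vp : F →L[ℝ] H)
    (hVr : (adjoint Vr) ∘L Vr = 1) (hVp : (adjoint Vp) ∘L Vp = 1)
    (hcompl : Vr ∘L adjoint Vr + Vp ∘L adjoint Vp = 1)
    (horth : (adjoint Vr) ∘L Vp = 0)
    (Λr Dr Sr : EuclideanSpace ℝ (Fin r) →L[ℝ] EuclideanSpace ℝ (Fin r))
    (Λp Dp Sp : F →L[ℝ] F)
    (lam : ℝ) (hlam : 0 ≤ lam)
    (hΛrsa : IsSelfAdjoint Λr) (hΛrpos : ∀ x, 0 ≤ (inner ℝ (Λr x) x : ℝ))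
    (hΛpsa : IsSelfAdjoint Λp) (hΛppos : ∀ x, 0 ≤ (inner ℝ (Λp x) x : ℝ))
    (hΛpnorm : ‖Λp‖ ≤ lam)
    (hDr₁ : Dr ∘L (1 + Λr) = 1) (hDr₂ : (1 + Λr) ∘L Dr = 1)
    (hDp₁ : Dp ∘L (1 + Λp) = 1) (hDp₂ : (1 + Λp) ∘L Dp = 1)
    (hSrsa : IsSelfAdjoint Sr) (hSrpos : ∀ x, 0 ≤ (inner ℝ (Sr x) x : ℝ))
    (hSr : Sr ∘L Sr = Dr)
    (hSpsa : IsSelfAdjoint Sp) (hSppos : ∀ x, 0 ≤ (inner ℝ (Sp x) x : ℝ))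
    (hSp : Sp ∘L Sp = Dp)
    (ρ₁ ρ₂ : ℝ) (hρ₁ : 0 ≤ ρ₁) (hρ₂ : 0 ≤ ρ₂)
    (v g ξ : H)
    (K Khalf Khat Khathalf : H →L[ℝ] H)
    (hK : K = Vr ∘L Dr ∘L adjoint Vr + Vp ∘L Dp ∘L adjoint Vp)
    (hKhalf : Khalf = Vr ∘L Sr ∘L adjoint Vr + Vp ∘L Sp ∘L adjoint Vp)
    (hKhat : Khat = 1 + Vr ∘L (Dr - 1) ∘L adjoint Vr)
    (hKhathalf : Khathalf = 1 + Vr ∘L (Sr - 1) ∘L adjoint Vr)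
    (vfull vdr : H)
    (hvfull : vfull = v - ρ₁ • K v - ρ₁ • K g + ρ₂ • Khalf ξ)
    (hvdr : vdr = v - ρ₁ • Khat v - ρ₁ • Khat ((Vr ∘L adjoint Vr) g) + ρ₂ • Khathalf ξ) :
    ‖vdr - vfull‖ ≤
      ρ₁ * ((lam / (lam + 1)) * ‖v‖ + ‖g‖) +
        ρ₂ * (lam / (lam + 1 + Real.sqrt (lam + 1))) * ‖ξ‖ :=
  stmt11_general Vr Vp hVr hVp hcompl Dr Sr Λp Dp Sp lam hΛpsa hΛppos hΛpnorm hDp₂ hSpsa hSppos hSp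
    ρ₁ ρ₂ hρ₁ hρ₂ v g ξ K Khalf Khat Khathalf hK hKhalf hKhat hKhathalf vfull vdr hvfull hvdr
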